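/- Let X₁, X₂, … be a sequence of random variables taking values in a Banach space with norm ‖·‖. Assume there exist constants A > 0 and a > 0 and a sequence of non-decreasing non-negative functions {g_n}_{n≥1} on (0,∞) such that for all t > 0 and n ≥ 1, g_n(t) ≤ g_{n+1}(t), and for every 0 < ρ < 1, lim_{n→∞} inf{ t²/(g_n(t)·log t) : t > 0, g_n(t) > ρn } = ∞ (infimum of the empty set being ∞), and such that for all integers m ≥ 0, n ≥ 1 and all t ≥ 0, P{‖S(m+1, m+n)‖ > t} ≤ A·exp{ −a t² / (n + g_n(t)) }. Then for every 0 < c < a there exists a constant C > 0 (depending only on A, a and {g_n}) such that for all n ≥ 1, m ≥ 0 and t ≥ 0, P{M(m+1, m+n) > t} ≤ C·exp{ −c t² / (n + g_n(t)) }, where here M(k,l) = max{‖S(k,k)‖, …, ‖S(k,l)‖}. -/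

import Mathlib

/-!
Fix `c < c₁ < a`, a small `β > 0`, and write `Q = t² / (n + gₙ(t))`. The bound is trivial while `Q`
stays bounded, and for bounded `n` it follows from the union bound over the `n` partial sums. The
union bound also suffices when `gₙ(t) > β² n / 4`: there the growth condition on `gₙ` gives
`log n ≤ (a - c) Q`. Otherwise split `n = k + j` with `j ≈ β² n / 2`. If the maximum exceeds `t`,
then the maximum of the first `k` partial sums exceeds `t`, or `‖S(m+1, m+k)‖ > (1 - β) t`, or the
maximum of the `j` partial sums started at `m + k + 1` exceeds `β t`. As `gₙ(t)` is small against
`n`, the exponents of these three bounds (two of them by induction on `n`) are at least `c₁ Q`, and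
for large `Q` the factor `3 exp (-(c₁ - c) Q) ≤ 1` absorbs the three terms.
-/

open MeasureTheory Finset Real

namespace MaximalBernstein

section Events

variable {Ω E : Type*} [NormedAddCommGroup E]

/-- `S(m+1, m+n)`. -/
def partialSum (X : ℕ → Ω → E) (m n : ℕ) (ω : Ω) : E :=
  ∑ i ∈ Icc (m + 1) (m + n), X i ω

/-- The event `M(m+1, m+n) > t`. -/
def maxEvent (X : ℕ → Ω → E) (m n : ℕ) (t : ℝ) : Set Ω :=
  {ω | ∃ j ∈ Icc 1 n, t < ‖partialSum X m j ω‖}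

theorem setOf_lt_sup'_eq_maxEvent (X : ℕ → Ω → E) (m : ℕ) {n : ℕ} (hn : (Icc 1 n).Nonempty)
    (t : ℝ) :
    {ω | t < (Icc 1 n).sup' hn (fun j => ‖∑ i ∈ Icc (m + 1) (m + j), X i ω‖)} =
      maxEvent X m n t := by
  ext ω
  simp only [maxEvent, partialSum, Set.mem_ofPred_eq, lt_sup'_iff]

theorem maxEvent_eq_biUnion (X : ℕ → Ω → E) (m n : ℕ) (t : ℝ) :
    maxEvent X m n t = ⋃ j ∈ Icc 1 n, {ω | t < ‖partialSum X m j ω‖} := by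
  ext ω
  simp [maxEvent]

theorem partialSum_add (X : ℕ → Ω → E) (m k j : ℕ) (ω : Ω) :
    partialSum X m (k + j) ω = partialSum X m k ω + partialSum X (m + k) j ω := by
  simp only [partialSum, Icc_add_one_left_eq_Ioc, ← add_assoc]
  exact (sum_Ioc_consecutive _ (by omega) (by omega)).symm

theorem maxEvent_add_subset (X : ℕ → Ω → E) (m k j : ℕ) {t t₁ t₂ : ℝ} (ht : t₁ + t₂ ≤ t) :
    maxEvent X m (k + j) t ⊆
      maxEvent X m k t ∪ {ω | t₁ < ‖partialSum X m k ω‖} ∪ maxEvent X (m + k) j t₂ := by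
  rintro ω ⟨i, hi, hti⟩
  obtain ⟨hi₁, hik⟩ := mem_Icc.mp hi
  by_cases hik' : i ≤ k
  · exact Or.inl (Or.inl ⟨i, mem_Icc.mpr ⟨hi₁, hik'⟩, hti⟩)
  obtain ⟨l, rfl⟩ : ∃ l, i = k + l := ⟨i - k, by omega⟩
  rcases lt_or_ge t₁ ‖partialSum X m k ω‖ with hk | hk
  · exact Or.inl (Or.inr hk)
  refine Or.inr ⟨l, mem_Icc.mpr ⟨by omega, by omega⟩, ?_⟩
  rw [partialSum_add] at hti
  linarith [norm_add_le (partialSum X m k ω) (partialSum X (m + k) l ω)]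

variable [MeasurableSpace Ω] {P : Measure Ω}

theorem measureReal_maxEvent_le_sum (X : ℕ → Ω → E) (m n : ℕ) (t : ℝ) :
    P.real (maxEvent X m n t) ≤ ∑ j ∈ Icc 1 n, P.real {ω | t < ‖partialSum X m j ω‖} := by
  rw [maxEvent_eq_biUnion]
  exact measureReal_biUnion_finset_le _ _

theorem measureReal_maxEvent_add_le [IsFiniteMeasure P] (X : ℕ → Ω → E) (m k j : ℕ)
    {t t₁ t₂ : ℝ} (ht : t₁ + t₂ ≤ t) :
    P.real (maxEvent X m (k + j) t) ≤ P.real (maxEvent X m k t) +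
      P.real {ω | t₁ < ‖partialSum X m k ω‖} + P.real (maxEvent X (m + k) j t₂) :=
  (measureReal_mono (maxEvent_add_subset X m k j ht)).trans <|
    (measureReal_union_le _ _).trans (by gcongr; exact measureReal_union_le _ _)

end Events

section Exponent

variable {g : ℕ → ℝ → ℝ}

noncomputable def bernsteinExponent (g : ℕ → ℝ → ℝ) (n : ℕ) (t : ℝ) : ℝ :=
  t ^ 2 / (n + g n t)

theorem neg_mul_sq_div_eq (g : ℕ → ℝ → ℝ) (c : ℝ) (n : ℕ) (t : ℝ) :
    -(c * t ^ 2) / (n + g n t) = -(c * bernsteinExponent g n t) := by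
  rw [bernsteinExponent, neg_div, mul_div_assoc]

theorem bernsteinExponent_nonneg {n : ℕ} {t : ℝ} (hg : 0 ≤ g n t) :
    0 ≤ bernsteinExponent g n t := by
  unfold bernsteinExponent
  positivity

theorem bernsteinExponent_le_sq {n : ℕ} (hn : 1 ≤ n) {t : ℝ} (hg : 0 ≤ g n t) :
    bernsteinExponent g n t ≤ t ^ 2 := by
  have : (1 : ℝ) ≤ n := by exact_mod_cast hn
  exact div_le_self (sq_nonneg t) (by linarith)

theorem le_of_index_le (hg_incr : ∀ n : ℕ, 1 ≤ n → ∀ t : ℝ, 0 < t → g n t ≤ g (n + 1) t)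
    {t : ℝ} (ht : 0 < t) {j n : ℕ} (hj : 1 ≤ j) (hjn : j ≤ n) : g j t ≤ g n t := by
  induction n, hjn using Nat.le_induction with
  | base => exact le_rfl
  | succ n hjn ih => exact ih.trans (hg_incr n (hj.trans hjn) t ht)

theorem mul_bernsteinExponent_le {c c₁ lam μ t : ℝ} {n k : ℕ} (hc₁ : 0 ≤ c₁) (hμ : 0 < μ)
    (hcc₁ : c₁ * μ ≤ c * lam ^ 2) (hk : 0 < k + g k (lam * t))
    (hkn : k + g k (lam * t) ≤ μ * (n + g n t)) :
    c₁ * bernsteinExponent g n t ≤ c * bernsteinExponent g k (lam * t) := by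
  have hn : 0 < (n : ℝ) + g n t := pos_of_mul_pos_right (hk.trans_le hkn) hμ.le
  unfold bernsteinExponent
  calc c₁ * (t ^ 2 / (n + g n t)) = c₁ * μ * t ^ 2 / (μ * (n + g n t)) := by
        field_simp
    _ ≤ c * lam ^ 2 * t ^ 2 / (μ * (n + g n t)) := by gcongr
    _ ≤ c * lam ^ 2 * t ^ 2 / (k + g k (lam * t)) :=
        div_le_div_of_nonneg_left
          (mul_nonneg ((mul_nonneg hc₁ hμ.le).trans hcc₁) (sq_nonneg t)) hk hkn
    _ = c * ((lam * t) ^ 2 / (k + g k (lam * t))) := by ring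

theorem mul_bernsteinExponent_le_of_le {c c₁ μ t : ℝ} {n k : ℕ} (hc₁ : 0 ≤ c₁) (hμ : 0 < μ)
    (hcc₁ : c₁ * μ ≤ c) (hk : 0 < k + g k t) (hkn : k + g k t ≤ μ * (n + g n t)) :
    c₁ * bernsteinExponent g n t ≤ c * bernsteinExponent g k t := by
  simpa using mul_bernsteinExponent_le (lam := 1) hc₁ hμ (by simpa using hcc₁) (by simpa using hk)
    (by simpa using hkn)

end Exponent

section RealInequalities

theorem exists_bisection_rate {a c : ℝ} (hc : 0 < c) (hca : c < a) :
    ∃ β c₁ : ℝ, 0 < β ∧ β < 1 / 4 ∧ c < c₁ ∧ c₁ * (1 - β ^ 2 / 8) ≤ c ∧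
      c₁ * (1 - β ^ 2 / 8) ≤ a * (1 - β) ^ 2 ∧ 3 * c₁ ≤ 4 * c := by
  have ha : 0 < a := hc.trans hca
  -- chosen so that `a (1 - β)² ≥ a (1 - 2β) = (a + c) / 2`
  set β := (a - c) / (4 * a)
  have hβ : 0 < β := div_pos (by linarith) (by linarith)
  have hβ1 : β < 1 / 4 := by rw [div_lt_iff₀ (by linarith)]; linarith
  have haβ : a * β = (a - c) / 4 := by simp only [β]; field_simp
  have hμ : 0 < 1 - β ^ 2 / 8 := by nlinarith
  refine ⟨β, min ((a + c) / 2) (c * (1 + β ^ 2 / 8)), hβ, hβ1,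
    lt_min (by linarith) (by nlinarith [mul_pos hc (pow_pos hβ 2)]), ?_, ?_, ?_⟩
  · calc min ((a + c) / 2) (c * (1 + β ^ 2 / 8)) * (1 - β ^ 2 / 8)
        ≤ c * (1 + β ^ 2 / 8) * (1 - β ^ 2 / 8) := by gcongr; exact min_le_right _ _
      _ ≤ c := by nlinarith [pow_pos hβ 4]
  · calc min ((a + c) / 2) (c * (1 + β ^ 2 / 8)) * (1 - β ^ 2 / 8)
        ≤ (a + c) / 2 * 1 := by gcongr; exacts [min_le_left _ _, by nlinarith]
      _ ≤ a * (1 - β) ^ 2 := by nlinarith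
  · nlinarith [min_le_right ((a + c) / 2) (c * (1 + β ^ 2 / 8)),
      mul_le_mul_of_nonneg_left (show β ^ 2 ≤ 1 / 16 by nlinarith) hc.le]

theorem three_mul_exp_neg_le_one {ε Q : ℝ} (hε : 0 < ε) (hQ : log 3 / ε ≤ Q) :
    3 * exp (-(ε * Q)) ≤ 1 := by
  have h3 : (3 : ℝ) ≤ exp (ε * Q) := by
    rw [← exp_log (by norm_num : (0 : ℝ) < 3)]
    exact exp_le_exp.mpr ((div_le_iff₀' hε).mp hQ)
  rw [exp_neg]
  exact mul_inv_le_one_of_le₀ h3 (exp_pos _).le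

theorem one_le_log_of_exp_two_le_sq {t : ℝ} (ht : 0 < t) (h : exp 2 ≤ t ^ 2) : 1 ≤ log t := by
  have := (le_log_iff_exp_le (by positivity)).mpr h
  rw [log_pow] at this
  push_cast at this
  linarith

theorem le_mul_exp_of_le_one {p c Q Q₀ C : ℝ} (hp : p ≤ 1) (hc : 0 ≤ c) (hQ : Q ≤ Q₀)
    (hC : exp (c * Q₀) ≤ C) : p ≤ C * exp (-(c * Q)) :=
  calc p ≤ 1 := hp
    _ ≤ exp (c * Q₀) * exp (-(c * Q)) := by
        rw [← exp_add]; exact one_le_exp (by nlinarith)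
    _ ≤ C * exp (-(c * Q)) := by gcongr

theorem le_mul_exp_of_le_add {p p₁ p₂ p₃ C c c₁ Q : ℝ} (hC : 0 ≤ C) (hp : p ≤ p₁ + p₂ + p₃)
    (h₁ : p₁ ≤ C * exp (-(c₁ * Q))) (h₂ : p₂ ≤ C * exp (-(c₁ * Q)))
    (h₃ : p₃ ≤ C * exp (-(c₁ * Q))) (hQ : 3 * exp (-((c₁ - c) * Q)) ≤ 1) :
    p ≤ C * exp (-(c * Q)) :=
  calc p ≤ C * exp (-(c * Q)) * (3 * exp (-((c₁ - c) * Q))) := by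
        have : exp (-(c₁ * Q)) = exp (-(c * Q)) * exp (-((c₁ - c) * Q)) := by
          rw [← exp_add]; ring_nf
        rw [this] at h₁ h₂ h₃
        linarith
    _ ≤ C * exp (-(c * Q)) := mul_le_of_le_one_right (by positivity) hQ

theorem log_le_mul_div_of_lt {ρ ε G t : ℝ} {n : ℕ} (hρ : 0 < ρ) (hρ1 : ρ ≤ 1) (hε : 0 < ε)
    (hn : 1 ≤ n) (ht : 1 ≤ log t) (hG : ρ * n < G) (hK : (4 / ε + 1) / ρ ≤ t ^ 2 / (G * log t)) :
    log n ≤ ε * (t ^ 2 / (n + G)) := by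
  set K := (4 / ε + 1) / ρ
  have hρK : ρ * K = 4 / ε + 1 := mul_div_cancel₀ _ hρ.ne'
  have hρK₁ : 1 ≤ ρ * K := by rw [hρK]; linarith [div_pos (by norm_num : (0 : ℝ) < 4) hε]
  have hερK : 4 ≤ ε * (ρ * K) := by rw [hρK, mul_add, mul_div_cancel₀ _ hε.ne']; linarith
  have hn0 : (0 : ℝ) < n := by exact_mod_cast hn
  have hG0 : 0 < G := (mul_pos hρ hn0).trans hG
  have hK0 : 0 < K := pos_of_mul_pos_right (one_pos.trans_le hρK₁) hρ.le
  have hKt : K * (G * log t) ≤ t ^ 2 := (le_div_iff₀ (by positivity)).mp hK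
  have hnt : (n : ℝ) ≤ t ^ 2 := by
    have h₁ : (n : ℝ) ≤ K * G := by nlinarith [mul_le_mul_of_nonneg_left hG.le hK0.le]
    have h₂ : K * G ≤ K * (G * log t) := by nlinarith [mul_pos hK0 hG0]
    linarith
  have hlogn : log n ≤ 2 * log t := by
    have := log_le_log hn0 hnt
    rwa [log_pow, Nat.cast_ofNat] at this
  have hsum : ρ * (n + G) ≤ 2 * G := by nlinarith
  have key : ρ * (2 * log t * (n + G)) ≤ ρ * (ε * t ^ 2) := by
    nlinarith [mul_le_mul_of_nonneg_left hKt (mul_nonneg hε.le hρ.le),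
      mul_le_mul_of_nonneg_left hsum (by linarith : (0 : ℝ) ≤ 2 * log t),
      mul_le_mul_of_nonneg_right hερK (by positivity : (0 : ℝ) ≤ G * log t)]
  rw [← mul_div_assoc, le_div_iff₀ (by positivity)]
  nlinarith [le_of_mul_le_mul_left key hρ]

theorem exists_bisection_split {θ : ℝ} {n : ℕ} (hθ : θ ≤ 1) (hn : 8 ≤ θ * n) :
    ∃ k j : ℕ, k + j = n ∧ 1 ≤ k ∧ 1 ≤ j ∧ 3 * θ * n / 8 ≤ j ∧ (j : ℝ) ≤ θ * n / 2 := by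
  set j := ⌊θ * n / 2⌋₊
  have hj_le : (j : ℝ) ≤ θ * n / 2 := Nat.floor_le (by linarith)
  have hj_gt : θ * n / 2 < j + 1 := Nat.lt_floor_add_one _
  have hθn : θ * n ≤ n := mul_le_of_le_one_left (Nat.cast_nonneg n) hθ
  have hjn : j < n := by exact_mod_cast (show (j : ℝ) < n by linarith)
  refine ⟨n - j, j, by omega, by omega, ?_, by linarith, hj_le⟩
  exact_mod_cast (show (1 : ℝ) ≤ j by linarith)

theorem bisection_denominators {θ n k j G Gk Gj : ℝ} (hθ : 0 ≤ θ) (hθ1 : θ ≤ 1)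
    (hkj : k + j = n) (hj : 3 * θ * n / 8 ≤ j) (hj' : j ≤ θ * n / 2) (hG : 0 ≤ G)
    (hGn : G ≤ θ * n / 4) (hGk : Gk ≤ G) (hGj : Gj ≤ G) :
    k + Gk ≤ (1 - θ / 8) * (n + G) ∧ j + Gj ≤ 3 * θ / 4 * (n + G) := by
  have hθn : 0 ≤ θ * n := by linarith
  constructor
  · nlinarith [mul_le_mul_of_nonneg_left hGn hθ, mul_nonneg hθn (sub_nonneg.mpr hθ1)]
  · nlinarith [mul_nonneg hθ hG]

end RealInequalities

section Bounds

variable {Ω E : Type*} [MeasurableSpace Ω] [NormedAddCommGroup E] {P : Measure Ω}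
  {X : ℕ → Ω → E} {A a : ℝ} {g : ℕ → ℝ → ℝ}

theorem measureReal_maxEvent_le_mul_exp (hA : 0 ≤ A) (ha : 0 ≤ a)
    (hg_nonneg : ∀ n : ℕ, 1 ≤ n → ∀ t : ℝ, 0 < t → 0 ≤ g n t)
    (hg_incr : ∀ n : ℕ, 1 ≤ n → ∀ t : ℝ, 0 < t → g n t ≤ g (n + 1) t)
    (hS : ∀ m n : ℕ, 1 ≤ n → ∀ t : ℝ, 0 ≤ t →
      P.real {ω | t < ‖partialSum X m n ω‖} ≤ A * exp (-(a * bernsteinExponent g n t)))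
    (m n : ℕ) {t : ℝ} (ht : 0 < t) :
    P.real (maxEvent X m n t) ≤ n * A * exp (-(a * bernsteinExponent g n t)) :=
  calc P.real (maxEvent X m n t)
      ≤ ∑ j ∈ Icc 1 n, P.real {ω | t < ‖partialSum X m j ω‖} :=
        measureReal_maxEvent_le_sum X m n t
    _ ≤ ∑ _j ∈ Icc 1 n, A * exp (-(a * bernsteinExponent g n t)) := by
        refine sum_le_sum fun j hj => ?_
        obtain ⟨hj₁, hjn⟩ := mem_Icc.mp hj
        refine (hS m j hj₁ t ht.le).trans ?_
        have hjn' : (j : ℝ) ≤ n := by exact_mod_cast hjn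
        have hj₁' : (1 : ℝ) ≤ j := by exact_mod_cast hj₁
        have := mul_bernsteinExponent_le_of_le (g := g) (n := n) (k := j) ha one_pos (mul_one a).le
          (by linarith [hg_nonneg j hj₁ t ht]) (by linarith [le_of_index_le hg_incr ht hj₁ hjn])
        gcongr A * exp (-?_)
    _ = n * A * exp (-(a * bernsteinExponent g n t)) := by simp [mul_assoc]

theorem measureReal_maxEvent_le_of_log_le (hA : 0 ≤ A) (ha : 0 ≤ a)
    (hg_nonneg : ∀ n : ℕ, 1 ≤ n → ∀ t : ℝ, 0 < t → 0 ≤ g n t)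
    (hg_incr : ∀ n : ℕ, 1 ≤ n → ∀ t : ℝ, 0 < t → g n t ≤ g (n + 1) t)
    (hS : ∀ m n : ℕ, 1 ≤ n → ∀ t : ℝ, 0 ≤ t →
      P.real {ω | t < ‖partialSum X m n ω‖} ≤ A * exp (-(a * bernsteinExponent g n t)))
    {c t : ℝ} (m : ℕ) {n : ℕ} (hn : 1 ≤ n) (ht : 0 < t)
    (hlog : log n ≤ (a - c) * bernsteinExponent g n t) :
    P.real (maxEvent X m n t) ≤ A * exp (-(c * bernsteinExponent g n t)) := by
  have hn' : (n : ℝ) ≤ exp ((a - c) * bernsteinExponent g n t) :=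
    (log_le_iff_le_exp (by exact_mod_cast hn)).mp hlog
  calc P.real (maxEvent X m n t) ≤ n * A * exp (-(a * bernsteinExponent g n t)) :=
        measureReal_maxEvent_le_mul_exp hA ha hg_nonneg hg_incr hS m n ht
    _ ≤ exp ((a - c) * bernsteinExponent g n t) * A * exp (-(a * bernsteinExponent g n t)) := by
        gcongr
    _ = A * exp (-(c * bernsteinExponent g n t)) := by
        rw [mul_comm _ A, mul_assoc, ← exp_add]; ring_nf

theorem measureReal_maxEvent_le_of_bisection [IsFiniteMeasure P]
    (hg_nonneg : ∀ n : ℕ, 1 ≤ n → ∀ t : ℝ, 0 < t → 0 ≤ g n t)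
    (hg_mono : ∀ n : ℕ, 1 ≤ n → ∀ s t : ℝ, 0 < s → s ≤ t → g n s ≤ g n t)
    (hg_incr : ∀ n : ℕ, 1 ≤ n → ∀ t : ℝ, 0 < t → g n t ≤ g (n + 1) t)
    (hS : ∀ m n : ℕ, 1 ≤ n → ∀ t : ℝ, 0 ≤ t →
      P.real {ω | t < ‖partialSum X m n ω‖} ≤ A * exp (-(a * bernsteinExponent g n t)))
    {β c c₁ C t : ℝ} {m n : ℕ} (hβ : 0 < β) (hβ1 : β < 1) (hc₁ : 0 ≤ c₁)
    (h₁ : c₁ * (1 - β ^ 2 / 8) ≤ c) (h₂ : c₁ * (1 - β ^ 2 / 8) ≤ a * (1 - β) ^ 2)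
    (h₃ : 3 * c₁ ≤ 4 * c) (hAC : A ≤ C) (hC : 0 ≤ C) (hn : 8 ≤ β ^ 2 * n) (ht : 0 < t)
    (hg : g n t ≤ β ^ 2 * n / 4) (hQ : 3 * exp (-((c₁ - c) * bernsteinExponent g n t)) ≤ 1)
    (ih : ∀ k < n, ∀ m : ℕ, ∀ s : ℝ, 1 ≤ k → 0 ≤ s →
      P.real (maxEvent X m k s) ≤ C * exp (-(c * bernsteinExponent g k s))) :
    P.real (maxEvent X m n t) ≤ C * exp (-(c * bernsteinExponent g n t)) := by
  obtain ⟨k, j, rfl, hk, hj, hj₁, hj₂⟩ := exists_bisection_split (by nlinarith) hn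
  have hβt : 0 < β * t := mul_pos hβ ht
  have hβt' : 0 < (1 - β) * t := mul_pos (by linarith) ht
  have hk' : (1 : ℝ) ≤ k := by exact_mod_cast hk
  have hj' : (1 : ℝ) ≤ j := by exact_mod_cast hj
  have hgk : g k ((1 - β) * t) ≤ g k t := hg_mono k hk _ _ hβt' (by nlinarith)
  have hgj : g j (β * t) ≤ g (k + j) t :=
    (hg_mono j hj _ _ hβt (by nlinarith)).trans (le_of_index_le hg_incr ht hj (by omega))
  obtain ⟨hden₁, hden₃⟩ := bisection_denominators (by positivity) (by nlinarith) (Nat.cast_add k j).symm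
    hj₁ hj₂ (hg_nonneg _ (by omega) t ht) hg (le_of_index_le hg_incr ht hk (by omega)) hgj
  refine le_mul_exp_of_le_add hC
    (measureReal_maxEvent_add_le X m k j (t₁ := (1 - β) * t) (t₂ := β * t) (by linarith))
    ?_ ?_ ?_ hQ
  · refine (ih k (by omega) m t hk ht.le).trans ?_
    have := mul_bernsteinExponent_le_of_le hc₁ (by nlinarith) h₁
      (by linarith [hg_nonneg k hk t ht]) hden₁
    gcongr C * exp (-?_)
  · refine (hS m k hk _ hβt'.le).trans ?_
    have := mul_bernsteinExponent_le (g := g) (n := k + j) (k := k) (t := t) hc₁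
      (by nlinarith) h₂ (by linarith [hg_nonneg k hk _ hβt']) (by linarith)
    gcongr ?_ * exp (-?_)
  · refine (ih j (by omega) (m + k) (β * t) hj hβt.le).trans ?_
    have := mul_bernsteinExponent_le (g := g) (n := k + j) (k := j) (t := t) (c := c) (lam := β)
      (μ := 3 * β ^ 2 / 4) hc₁ (by positivity) (by nlinarith)
      (by linarith [hg_nonneg j hj _ hβt]) hden₃
    gcongr C * exp (-?_)

theorem exists_measureReal_maxEvent_le [IsProbabilityMeasure P] (hA : 0 < A) (ha : 0 < a)
    (hg_nonneg : ∀ n : ℕ, 1 ≤ n → ∀ t : ℝ, 0 < t → 0 ≤ g n t)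
    (hg_mono : ∀ n : ℕ, 1 ≤ n → ∀ s t : ℝ, 0 < s → s ≤ t → g n s ≤ g n t)
    (hg_incr : ∀ n : ℕ, 1 ≤ n → ∀ t : ℝ, 0 < t → g n t ≤ g (n + 1) t)
    (hg_lim : ∀ ρ : ℝ, 0 < ρ → ρ < 1 → ∀ K : ℝ, ∃ N : ℕ, ∀ n : ℕ, N ≤ n →
      ∀ t : ℝ, 0 < t → ρ * n < g n t → K ≤ t ^ 2 / (g n t * log t))
    (hS : ∀ m n : ℕ, 1 ≤ n → ∀ t : ℝ, 0 ≤ t →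
      P.real {ω | t < ‖partialSum X m n ω‖} ≤ A * exp (-(a * bernsteinExponent g n t)))
    {c : ℝ} (hc : 0 < c) (hca : c < a) :
    ∃ C, 0 < C ∧ ∀ n m : ℕ, ∀ t : ℝ, 1 ≤ n → 0 ≤ t →
      P.real (maxEvent X m n t) ≤ C * exp (-(c * bernsteinExponent g n t)) := by
  obtain ⟨β, c₁, hβ, hβ1, hcc₁, h₁, h₂, h₃⟩ := exists_bisection_rate hc hca
  have hρ : 0 < β ^ 2 / 4 := by positivity
  obtain ⟨N₁, hN₁⟩ := hg_lim _ hρ (by nlinarith) ((4 / (a - c) + 1) / (β ^ 2 / 4))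
  set Q₀ := max (exp 2) (log 3 / (c₁ - c))
  set N := max N₁ ⌈8 / β ^ 2⌉₊
  -- `C` absorbs the range `Q ≤ Q₀` and the union bound for `n < N`
  set C := (N + 1) * A + exp (c * Q₀)
  have hNA : (N + 1) * A ≤ C := le_add_of_nonneg_right (exp_pos _).le
  have hAC : A ≤ C := le_trans (by nlinarith) hNA
  refine ⟨C, by positivity, fun n => ?_⟩
  induction n using Nat.strong_induction_on with | _ n ih => ?_
  intro m t hn ht₀
  rcases le_or_gt (bernsteinExponent g n t) Q₀ with hQ | hQ
  · exact le_mul_exp_of_le_one measureReal_le_one hc.le hQ (le_add_of_nonneg_left (by positivity))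
  have hQ₀ : exp 2 < bernsteinExponent g n t := (le_max_left _ _).trans_lt hQ
  have ht : 0 < t := ht₀.lt_of_ne <| by
    rintro rfl
    simp [bernsteinExponent] at hQ₀
    linarith [exp_pos 2]
  have hg₀ := hg_nonneg n hn t ht
  rcases lt_or_ge n N with hnN | hnN
  · calc P.real (maxEvent X m n t) ≤ n * A * exp (-(a * bernsteinExponent g n t)) :=
          measureReal_maxEvent_le_mul_exp hA.le ha.le hg_nonneg hg_incr hS m n ht
      _ ≤ C * exp (-(c * bernsteinExponent g n t)) := by
          have : (n : ℝ) ≤ N := by exact_mod_cast hnN.le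
          gcongr ?_ * exp (-?_)
          · nlinarith
          · exact mul_le_mul_of_nonneg_right hca.le (bernsteinExponent_nonneg hg₀)
  by_cases hg : β ^ 2 / 4 * n < g n t
  · have hlog := log_le_mul_div_of_lt hρ (by nlinarith) (sub_pos.mpr hca) hn
      (one_le_log_of_exp_two_le_sq ht (hQ₀.le.trans (bernsteinExponent_le_sq hn hg₀))) hg
      (hN₁ n (le_of_max_le_left hnN) t ht hg)
    refine (measureReal_maxEvent_le_of_log_le hA.le ha.le hg_nonneg hg_incr hS m hn ht hlog).trans ?_
    gcongr
  · exact measureReal_maxEvent_le_of_bisection hg_nonneg hg_mono hg_incr hS hβ (by linarith)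
      (hc.le.trans hcc₁.le) h₁ h₂ h₃ hAC (by positivity)
      ((div_le_iff₀' (by positivity)).mp (Nat.ceil_le.mp (le_of_max_le_right hnN))) ht
      (by linarith) (three_mul_exp_neg_le_one (by linarith) ((le_max_right _ _).trans hQ.le)) ih

end Bounds

end MaximalBernstein

open MaximalBernstein

theorem maximal_bernstein_inequality_banach_general
    {Ω : Type*} [MeasurableSpace Ω] (P : Measure Ω) [IsProbabilityMeasure P]
    {E : Type*} [NormedAddCommGroup E]
    (X : ℕ → Ω → E) (A a : ℝ) (g : ℕ → ℝ → ℝ)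
    (hA : 0 < A) (ha : 0 < a)
    (hg_nonneg : ∀ n : ℕ, 1 ≤ n → ∀ t : ℝ, 0 < t → 0 ≤ g n t)
    (hg_mono : ∀ n : ℕ, 1 ≤ n → ∀ s t : ℝ, 0 < s → s ≤ t → g n s ≤ g n t)
    (hg_incr : ∀ n : ℕ, 1 ≤ n → ∀ t : ℝ, 0 < t → g n t ≤ g (n + 1) t)
    (hg_lim : ∀ ρ : ℝ, 0 < ρ → ρ < 1 → ∀ K : ℝ, ∃ N : ℕ, ∀ n : ℕ, N ≤ n →
      ∀ t : ℝ, 0 < t → ρ * n < g n t → K ≤ t ^ 2 / (g n t * Real.log t))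
    (hS : ∀ m n : ℕ, 1 ≤ n → ∀ t : ℝ, 0 ≤ t →
      (P {ω | t < ‖∑ i ∈ Finset.Icc (m + 1) (m + n), X i ω‖}).toReal ≤
        A * Real.exp (-(a * t ^ 2) / (n + g n t))) :
    ∀ c : ℝ, 0 < c → c < a →
      ∃ C : ℝ, 0 < C ∧
        ∀ m n : ℕ, ∀ hn : 1 ≤ n, ∀ t : ℝ, 0 ≤ t →
          (P {ω | t < (Finset.Icc 1 n).sup' (Finset.nonempty_Icc.mpr hn)
              (fun j => ‖∑ i ∈ Finset.Icc (m + 1) (m + j), X i ω‖)}).toReal ≤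
            C * Real.exp (-(c * t ^ 2) / (n + g n t)) := by
  intro c hc hca
  obtain ⟨C, hC, hbound⟩ := exists_measureReal_maxEvent_le hA ha hg_nonneg hg_mono hg_incr hg_lim
    (fun m n hn t ht => by rw [← neg_mul_sq_div_eq]; exact hS m n hn t ht) hc hca
  refine ⟨C, hC, fun m n hn t ht => ?_⟩
  rw [setOf_lt_sup'_eq_maxEvent, neg_mul_sq_div_eq]
  exact hbound n m t hn ht

/-- Banach-space valued version of the general maximal Bernstein-type
inequality: with `E` a Banach space, partial sums `S(m+1, m+n)` of the
`E`-valued random variables `X i` and the maximum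
`M(m+1, m+n) = max_{1 ≤ j ≤ n} ‖S(m+1, m+j)‖`, a Bernstein-type bound
`P{‖S(m+1,m+n)‖ > t} ≤ A exp{-a t² / (n + g n t)}` implies, for every
`0 < c < a`, a bound `P{M(m+1,m+n) > t} ≤ C exp{-c t² / (n + g n t)}`. -/
theorem maximal_bernstein_inequality_banach
    {Ω : Type*} [MeasurableSpace Ω] (P : Measure Ω) [IsProbabilityMeasure P]
    {E : Type*} [NormedAddCommGroup E] [NormedSpace ℝ E] [CompleteSpace E]
    (X : ℕ → Ω → E) (A a : ℝ) (g : ℕ → ℝ → ℝ)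
    (hA : 0 < A) (ha : 0 < a)
    (hg_nonneg : ∀ n : ℕ, 1 ≤ n → ∀ t : ℝ, 0 < t → 0 ≤ g n t)
    (hg_mono : ∀ n : ℕ, 1 ≤ n → ∀ s t : ℝ, 0 < s → s ≤ t → g n s ≤ g n t)
    (hg_incr : ∀ n : ℕ, 1 ≤ n → ∀ t : ℝ, 0 < t → g n t ≤ g (n + 1) t)
    (hg_lim : ∀ ρ : ℝ, 0 < ρ → ρ < 1 → ∀ K : ℝ, ∃ N : ℕ, ∀ n : ℕ, N ≤ n →
      ∀ t : ℝ, 0 < t → ρ * n < g n t → K ≤ t ^ 2 / (g n t * Real.log t))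
    (hS : ∀ m n : ℕ, 1 ≤ n → ∀ t : ℝ, 0 ≤ t →
      (P {ω | t < ‖∑ i ∈ Finset.Icc (m + 1) (m + n), X i ω‖}).toReal ≤
        A * Real.exp (-(a * t ^ 2) / (n + g n t))) :
    ∀ c : ℝ, 0 < c → c < a →
      ∃ C : ℝ, 0 < C ∧
        ∀ m n : ℕ, ∀ hn : 1 ≤ n, ∀ t : ℝ, 0 ≤ t →
          (P {ω | t < (Finset.Icc 1 n).sup' (Finset.nonempty_Icc.mpr hn)
              (fun j => ‖∑ i ∈ Finset.Icc (m + 1) (m + j), X i ω‖)}).toReal ≤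
            C * Real.exp (-(c * t ^ 2) / (n + g n t)) :=
  maximal_bernstein_inequality_banach_general P X A a g hA ha hg_nonneg hg_mono hg_incr hg_lim hS
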